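/- arXiv:2306.12025 — 2 statements merged into one kernel-verified Lean document; each statement's English description precedes it below -/
import Mathlib

section
/- For every X ∈ Sym⁺(p) and every (U,D) ∈ M(p), the partial scaling-rotation distance satisfies d_SR(X, F(U,D)) ≤ d_PSR(X,(U,D)), with equality whenever F(U,D) has p distinct eigenvalues. -/
open scoped BigOperators
open Matrix

namespace SR

variable {p : ℕ}

/-- Frobenius norm of a matrix. -/
noncomputable def frobNorm (A : Matrix (Fin p) (Fin p) ℝ) : ℝ :=
  Real.sqrt (∑ i, ∑ j, (A i j) ^ 2)

/-- `U` is a special orthogonal (rotation) matrix. -/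
def IsSO (U : Matrix (Fin p) (Fin p) ℝ) : Prop :=
  U * Uᵀ = 1 ∧ U.det = 1

/-- `D` is diagonal with positive diagonal entries. -/
def IsDiagPos (D : Matrix (Fin p) (Fin p) ℝ) : Prop :=
  D.IsDiag ∧ ∀ i, 0 < D i i

/-- `X` is symmetric positive definite. -/
def IsSPD (X : Matrix (Fin p) (Fin p) ℝ) : Prop :=
  X.IsSymm ∧ X.PosDef

/-- Membership in the eigen-decomposition space `M(p) = SO(p) × Diag⁺(p)`. -/
def IsM (m : Matrix (Fin p) (Fin p) ℝ × Matrix (Fin p) (Fin p) ℝ) : Prop :=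
  IsSO m.1 ∧ IsDiagPos m.2

/-- The eigen-composition map `F(U, D) = U D Uᵀ`. -/
def Fmap (m : Matrix (Fin p) (Fin p) ℝ × Matrix (Fin p) (Fin p) ℝ) :
    Matrix (Fin p) (Fin p) ℝ := m.1 * m.2 * m.1ᵀ

/-- `m = (U, D)` is an eigen-decomposition of `X`. -/
def IsEigenDecomp (X : Matrix (Fin p) (Fin p) ℝ)
    (m : Matrix (Fin p) (Fin p) ℝ × Matrix (Fin p) (Fin p) ℝ) : Prop :=
  IsM m ∧ Fmap m = X

/-- Geodesic distance on `SO(p)`: `(1/√2)‖Log (U₂ U₁ᵀ)‖_F`, where `Log` denotes a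
minimal-Frobenius-norm skew-symmetric logarithm. -/
noncomputable def dSO (U₁ U₂ : Matrix (Fin p) (Fin p) ℝ) : ℝ :=
  sInf {x : ℝ | ∃ A : Matrix (Fin p) (Fin p) ℝ, Aᵀ = -A ∧
    NormedSpace.exp A = U₂ * U₁ᵀ ∧ x = (1 / Real.sqrt 2) * frobNorm A}

/-- Geodesic distance on `Diag⁺(p)`: `‖Log D₁ − Log D₂‖_F`. -/
noncomputable def dDiag (D₁ D₂ : Matrix (Fin p) (Fin p) ℝ) : ℝ :=
  Real.sqrt (∑ i, (Real.log (D₁ i i) - Real.log (D₂ i i)) ^ 2)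

/-- Geodesic distance on `M(p)` with weight `k` on the rotation part. -/
noncomputable def dM (k : ℝ)
    (m₁ m₂ : Matrix (Fin p) (Fin p) ℝ × Matrix (Fin p) (Fin p) ℝ) : ℝ :=
  Real.sqrt (k * (dSO m₁.1 m₂.1) ^ 2 + (dDiag m₁.2 m₂.2) ^ 2)

/-- Scaling-rotation distance between SPD matrices. -/
noncomputable def dSR (k : ℝ) (X Y : Matrix (Fin p) (Fin p) ℝ) : ℝ :=
  sInf {x : ℝ | ∃ mX mY, IsEigenDecomp X mX ∧ IsEigenDecomp Y mY ∧ x = dM k mX mY}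

/-- Partial scaling-rotation distance. -/
noncomputable def dPSR (k : ℝ) (X : Matrix (Fin p) (Fin p) ℝ)
    (m : Matrix (Fin p) (Fin p) ℝ × Matrix (Fin p) (Fin p) ℝ) : ℝ :=
  sInf {x : ℝ | ∃ mX, IsEigenDecomp X mX ∧ x = dM k mX m}

/-- `P` is a signed permutation matrix. -/
def IsSignedPermMatrix (P : Matrix (Fin p) (Fin p) ℝ) : Prop :=
  ∃ (π : Equiv.Perm (Fin p)) (ε : Fin p → ℝ),
    (∀ i, ε i = 1 ∨ ε i = -1) ∧ ∀ i j, P i j = ε i * (if i = π j then 1 else 0)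

/-- `P` is an even signed permutation matrix (an element of `G(p)`). -/
def IsEvenSignedPerm (P : Matrix (Fin p) (Fin p) ℝ) : Prop :=
  IsSignedPermMatrix P ∧ P.det = 1

/-- `β_{G(p)}`: the minimal rotation distance from the identity to a nonidentity
even signed permutation matrix. -/
noncomputable def betaG (p : ℕ) : ℝ :=
  sInf {x : ℝ | ∃ h : Matrix (Fin p) (Fin p) ℝ, IsEvenSignedPerm h ∧ h ≠ 1 ∧ x = dSO 1 h}

/-- `S` has a repeated eigenvalue (belongs to a lower stratum). -/
def HasRepeatedEig (S : Matrix (Fin p) (Fin p) ℝ) : Prop :=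
  ∃ m, IsEigenDecomp S m ∧ ¬ Function.Injective (fun i => m.2 i i)

/-- `S` has `p` distinct eigenvalues (belongs to the top stratum). -/
def HasDistinctEigs (S : Matrix (Fin p) (Fin p) ℝ) : Prop :=
  ∃ m, IsEigenDecomp S m ∧ Function.Injective (fun i => m.2 i i)

/-- `δ(S)`: scaling-rotation distance from `S` to the lower strata. -/
noncomputable def deltaFun (k : ℝ) (S : Matrix (Fin p) (Fin p) ℝ) : ℝ :=
  sInf {x : ℝ | ∃ S', IsSPD S' ∧ HasRepeatedEig S' ∧ x = dSR k S S'}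

/-- Diameter of `SO(p)` in the rotation distance. -/
noncomputable def diamSO (p : ℕ) : ℝ :=
  sSup {x : ℝ | ∃ U V : Matrix (Fin p) (Fin p) ℝ, IsSO U ∧ IsSO V ∧ x = dSO U V}

/-!
Pairing any eigen-decomposition of `X` with `(U, D)` is admissible in the infimum defining
`d_SR`, which gives the inequality. For equality, let `(U_X, D_X)` and `(U_Y, D_Y)` be
eigen-decompositions of `X` and `F(U, D)`. The rotation `V = U_Yᵀ U` satisfies
`Vᵀ D_Y V = D`, and since `D` has distinct entries `V` must be a signed permutation matrix.
Hence `(U_X V, Vᵀ D_X V)` is again an eigen-decomposition of `X`, and `d_M` is invariant under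
this right action of `V`, so its distance to `(U, D) = (U_Y V, Vᵀ D_Y V)` is
`d_M((U_X, D_X), (U_Y, D_Y))`.
-/

lemma IsSO.mul {U V : Matrix (Fin p) (Fin p) ℝ} (hU : IsSO U) (hV : IsSO V) : IsSO (U * V) := by
  refine ⟨?_, by rw [det_mul, hU.2, hV.2, one_mul]⟩
  rw [transpose_mul, Matrix.mul_assoc, ← Matrix.mul_assoc V, hV.1, Matrix.one_mul, hU.1]

lemma IsSO.transpose {U : Matrix (Fin p) (Fin p) ℝ} (hU : IsSO U) : IsSO Uᵀ :=
  ⟨by rw [transpose_transpose, mul_eq_one_comm.mp hU.1], by rw [det_transpose, hU.2]⟩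

lemma exists_orthogonal_diagonal_of_isSPD {X : Matrix (Fin p) (Fin p) ℝ} (hX : IsSPD X) :
    ∃ (U : Matrix (Fin p) (Fin p) ℝ) (d : Fin p → ℝ),
      U * Uᵀ = 1 ∧ (∀ i, 0 < d i) ∧ U * diagonal d * Uᵀ = X := by
  have hH : X.IsHermitian := hX.2.isHermitian
  refine ⟨hH.eigenvectorUnitary, hH.eigenvalues, ?_, hX.2.eigenvalues_pos, ?_⟩
  · simpa [star_eq_conjTranspose] using (mem_unitaryGroup_iff).mp hH.eigenvectorUnitary.2
  · simpa [Unitary.conjStarAlgAut_apply, star_eq_conjTranspose] using hH.spectral_theorem.symm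

lemma exists_isSO_conj_diagonal_eq {U : Matrix (Fin p) (Fin p) ℝ} (hU : U * Uᵀ = 1)
    (d : Fin p → ℝ) : ∃ U', IsSO U' ∧ U' * diagonal d * U'ᵀ = U * diagonal d * Uᵀ := by
  have hdet : U.det = 1 ∨ U.det = -1 := by
    simpa [det_mul, det_transpose, ← sq] using congrArg det hU
  rcases hdet with hdet | hdet
  · exact ⟨U, ⟨hU, hdet⟩, rfl⟩
  obtain ⟨i₀⟩ : Nonempty (Fin p) := by
    rcases isEmpty_or_nonempty (Fin p) with h | h
    · norm_num [det_isEmpty] at hdet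
    · exact h
  -- flipping the sign of one column fixes the determinant without changing `U D Uᵀ`
  set s : Fin p → ℝ := Function.update 1 i₀ (-1)
  have hs : ∀ i, s i * s i = 1 := fun i => by by_cases h : i = i₀ <;> simp [s, h]
  have hE : diagonal s * diagonal s = 1 := by simp only [diagonal_mul_diagonal, hs, diagonal_one]
  refine ⟨U * diagonal s, ⟨?_, ?_⟩, ?_⟩
  · rw [transpose_mul, diagonal_transpose, Matrix.mul_assoc, ← Matrix.mul_assoc (diagonal s),
      hE, Matrix.one_mul, hU]
  · rw [det_mul, hdet, det_diagonal, Finset.prod_update_of_mem (Finset.mem_univ _)]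
    simp
  · have hsds : diagonal s * diagonal d * diagonal s = diagonal d := by
      simp only [diagonal_mul_diagonal, mul_right_comm _ (d _), hs, one_mul]
    rw [transpose_mul, diagonal_transpose]
    conv_rhs => rw [← hsds]
    simp only [Matrix.mul_assoc]

lemma exists_isEigenDecomp {X : Matrix (Fin p) (Fin p) ℝ} (hX : IsSPD X) :
    ∃ m, IsEigenDecomp X m := by
  obtain ⟨U, d, hU, hd, rfl⟩ := exists_orthogonal_diagonal_of_isSPD hX
  obtain ⟨U', hU', hF⟩ := exists_isSO_conj_diagonal_eq hU d
  exact ⟨(U', diagonal d), ⟨hU', isDiag_diagonal d, by simpa using hd⟩, hF⟩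

lemma isSignedPermMatrix_of_diagonal_mul_eq {V : Matrix (Fin p) (Fin p) ℝ} (hV : V * Vᵀ = 1)
    {d e : Fin p → ℝ} (hd : Function.Injective d) (h : diagonal e * V = V * diagonal d) :
    IsSignedPermMatrix V := by
  have hrow : ∀ i i', ∑ j, V i j * V i' j = if i = i' then 1 else 0 := fun i i' => by
    simpa [mul_apply, one_apply] using congrFun (congrFun hV i) i'
  -- a nonzero entry `V i j` forces `e i = d j`, so each row has at most one nonzero entry
  have hsupp : ∀ i j j', V i j ≠ 0 → V i j' ≠ 0 → j = j' := fun i j j' hj hj' => by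
    have hent : ∀ j, e i * V i j = V i j * d j := fun j => by
      simpa [diagonal_mul, mul_diagonal] using congrFun (congrFun h i) j
    exact hd <| (mul_left_cancel₀ hj ((mul_comm _ _).trans (hent j))).symm.trans
      (mul_left_cancel₀ hj' ((mul_comm _ _).trans (hent j')))
  have hex : ∀ i, ∃ j, V i j ≠ 0 := fun i => by
    by_contra! h0
    simpa [h0] using hrow i i
  choose f hf using hex
  have hzero : ∀ i j, j ≠ f i → V i j = 0 := fun i j hj => by
    by_contra h0; exact hj (hsupp i j (f i) h0 (hf i))
  have hdot : ∀ i i', ∑ j, V i j * V i' j = V i (f i) * V i' (f i) := fun i i' =>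
    Finset.sum_eq_single (f i) (fun j _ hj => by rw [hzero i j hj, zero_mul]) (by simp)
  have hf_inj : Function.Injective f := fun i i' hii' => by
    by_contra hne
    have := (hdot i i').symm.trans (hrow i i')
    rw [if_neg hne, hii'] at this
    exact mul_ne_zero (hii' ▸ hf i) (hf i') this
  set π := Equiv.ofBijective f hf_inj.bijective_of_finite
  refine ⟨π.symm, fun i => V i (f i), fun i => ?_, fun i j => ?_⟩
  · have := (hdot i i).symm.trans (hrow i i)
    rw [if_pos rfl] at this
    exact mul_self_eq_one_iff.mp this
  · by_cases hij : j = f i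
    · subst hij; simp [π]
    · rw [hzero i j hij, if_neg, mul_zero]
      rintro rfl; exact hij (π.apply_symm_apply j).symm

lemma IsSignedPermMatrix.exists_perm_transpose_mul_mul {P : Matrix (Fin p) (Fin p) ℝ}
    (hP : IsSignedPermMatrix P) :
    ∃ π : Equiv.Perm (Fin p), ∀ D : Matrix (Fin p) (Fin p) ℝ, D.IsDiag →
      Pᵀ * D * P = diagonal fun i => D (π i) (π i) := by
  obtain ⟨π, ε, hε, hPε⟩ := hP
  refine ⟨π, fun D hD => ?_⟩
  rw [← hD.diagonal_diag]
  ext a b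
  have hε2 : ε (π a) * ε (π a) = 1 := by rcases hε (π a) with h | h <;> simp [h]
  by_cases hab : a = b
  · subst hab; simp [mul_apply, hPε, mul_right_comm _ (D _ _), hε2]
  · simp [mul_apply, hPε, π.injective.ne hab, diagonal_apply_ne _ hab]

lemma dSO_mul_right {A B V : Matrix (Fin p) (Fin p) ℝ} (hV : V * Vᵀ = 1) :
    dSO (A * V) (B * V) = dSO A B := by
  rw [dSO, dSO, transpose_mul, Matrix.mul_assoc, ← Matrix.mul_assoc V, hV, Matrix.one_mul]

lemma dDiag_transpose_mul_mul {P D₁ D₂ : Matrix (Fin p) (Fin p) ℝ} (hP : IsSignedPermMatrix P)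
    (h₁ : D₁.IsDiag) (h₂ : D₂.IsDiag) : dDiag (Pᵀ * D₁ * P) (Pᵀ * D₂ * P) = dDiag D₁ D₂ := by
  obtain ⟨π, hπ⟩ := hP.exists_perm_transpose_mul_mul
  simp only [dDiag, hπ _ h₁, hπ _ h₂, diagonal_apply_eq]
  rw [Equiv.sum_comp π fun i => (Real.log (D₁ i i) - Real.log (D₂ i i)) ^ 2]

def rightAct (m : Matrix (Fin p) (Fin p) ℝ × Matrix (Fin p) (Fin p) ℝ)
    (V : Matrix (Fin p) (Fin p) ℝ) : Matrix (Fin p) (Fin p) ℝ × Matrix (Fin p) (Fin p) ℝ :=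
  (m.1 * V, Vᵀ * m.2 * V)

section rightAct

variable {m m₁ m₂ mY : Matrix (Fin p) (Fin p) ℝ × Matrix (Fin p) (Fin p) ℝ}
  {V : Matrix (Fin p) (Fin p) ℝ}

lemma Fmap_rightAct (hV : V * Vᵀ = 1) : Fmap (rightAct m V) = Fmap m := by
  simp only [Fmap, rightAct, transpose_mul, Matrix.mul_assoc]
  rw [← Matrix.mul_assoc V, hV, Matrix.one_mul, ← Matrix.mul_assoc V, hV, Matrix.one_mul]

lemma IsM.rightAct (hm : IsM m) (hV : IsSO V) (hP : IsSignedPermMatrix V) :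
    IsM (rightAct m V) := by
  obtain ⟨π, hπ⟩ := hP.exists_perm_transpose_mul_mul
  refine ⟨hm.1.mul hV, ?_⟩
  rw [SR.rightAct, hπ _ hm.2.1]
  exact ⟨isDiag_diagonal _, fun i => by simpa using hm.2.2 (π i)⟩

lemma IsEigenDecomp.rightAct {X : Matrix (Fin p) (Fin p) ℝ} (h : IsEigenDecomp X m)
    (hV : IsSO V) (hP : IsSignedPermMatrix V) : IsEigenDecomp X (rightAct m V) :=
  ⟨h.1.rightAct hV hP, (Fmap_rightAct hV.1).trans h.2⟩

lemma dM_rightAct (k : ℝ) (hV : V * Vᵀ = 1) (hP : IsSignedPermMatrix V) (h₁ : m₁.2.IsDiag)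
    (h₂ : m₂.2.IsDiag) : dM k (rightAct m₁ V) (rightAct m₂ V) = dM k m₁ m₂ := by
  simp only [dM, rightAct, dSO_mul_right hV, dDiag_transpose_mul_mul hP h₁ h₂]

lemma rightAct_eq_of_Fmap_eq (hm : m.1 * m.1ᵀ = 1) (hmY : mY.1 * mY.1ᵀ = 1)
    (hF : Fmap mY = Fmap m) : rightAct mY (mY.1ᵀ * m.1) = m := by
  refine Prod.ext (by rw [rightAct, ← Matrix.mul_assoc, hmY, Matrix.one_mul]) ?_
  calc (mY.1ᵀ * m.1)ᵀ * mY.2 * (mY.1ᵀ * m.1) = m.1ᵀ * Fmap mY * m.1 := by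
        simp only [Fmap, transpose_mul, transpose_transpose, Matrix.mul_assoc]
    _ = m.2 := by
        rw [hF, Fmap, ← Matrix.mul_assoc, ← Matrix.mul_assoc, mul_eq_one_comm.mp hm,
          Matrix.one_mul, Matrix.mul_assoc, mul_eq_one_comm.mp hm, Matrix.mul_one]

end rightAct

lemma exists_isEigenDecomp_dM_eq (k : ℝ) {X : Matrix (Fin p) (Fin p) ℝ}
    {m mX mY : Matrix (Fin p) (Fin p) ℝ × Matrix (Fin p) (Fin p) ℝ} (hm : IsM m)
    (hinj : Function.Injective fun i => m.2 i i) (hmX : IsEigenDecomp X mX)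
    (hmY : IsEigenDecomp (Fmap m) mY) :
    ∃ mX', IsEigenDecomp X mX' ∧ dM k mX' m = dM k mX mY := by
  set V := mY.1ᵀ * m.1
  have hV : IsSO V := hmY.1.1.transpose.mul hm.1
  have hmV : rightAct mY V = m := rightAct_eq_of_Fmap_eq hm.1.1 hmY.1.1.1 hmY.2
  have hP : IsSignedPermMatrix V := by
    refine isSignedPermMatrix_of_diagonal_mul_eq hV.1 hinj (e := mY.2.diag) ?_
    change diagonal mY.2.diag * V = V * diagonal m.2.diag
    rw [hmY.1.2.1.diagonal_diag, hm.2.1.diagonal_diag, ← hmV]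
    simp only [rightAct, ← Matrix.mul_assoc, hV.1, Matrix.one_mul]
  refine ⟨rightAct mX V, hmX.rightAct hV hP, ?_⟩
  rw [← hmV, dM_rightAct k hV.1 hP hmX.1.2.1 hmY.1.2.1]

lemma dSR_le_dM (k : ℝ) {X Y : Matrix (Fin p) (Fin p) ℝ}
    {mX mY : Matrix (Fin p) (Fin p) ℝ × Matrix (Fin p) (Fin p) ℝ}
    (hmX : IsEigenDecomp X mX) (hmY : IsEigenDecomp Y mY) : dSR k X Y ≤ dM k mX mY :=
  csInf_le ⟨0, by rintro _ ⟨_, _, _, _, rfl⟩; exact Real.sqrt_nonneg _⟩ ⟨mX, mY, hmX, hmY, rfl⟩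

lemma dPSR_le_dM (k : ℝ) {X : Matrix (Fin p) (Fin p) ℝ}
    {mX m : Matrix (Fin p) (Fin p) ℝ × Matrix (Fin p) (Fin p) ℝ}
    (hmX : IsEigenDecomp X mX) : dPSR k X m ≤ dM k mX m :=
  csInf_le ⟨0, by rintro _ ⟨_, _, rfl⟩; exact Real.sqrt_nonneg _⟩ ⟨mX, hmX, rfl⟩

theorem dSR_le_dPSR_general (p : ℕ) (k : ℝ)
    (X : Matrix (Fin p) (Fin p) ℝ) (hX : IsSPD X)
    (m : Matrix (Fin p) (Fin p) ℝ × Matrix (Fin p) (Fin p) ℝ) (hm : IsM m) :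
    dSR k X (Fmap m) ≤ dPSR k X m ∧
      ((Function.Injective fun i => m.2 i i) → dSR k X (Fmap m) = dPSR k X m) := by
  obtain ⟨mX₀, hmX₀⟩ := exists_isEigenDecomp hX
  have hmm : IsEigenDecomp (Fmap m) m := ⟨hm, rfl⟩
  have hle : dSR k X (Fmap m) ≤ dPSR k X m := by
    refine le_csInf ⟨_, mX₀, hmX₀, rfl⟩ ?_
    rintro _ ⟨mX, hmX, rfl⟩
    exact dSR_le_dM k hmX hmm
  refine ⟨hle, fun hinj => hle.antisymm (le_csInf ⟨_, mX₀, m, hmX₀, hmm, rfl⟩ ?_)⟩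
  rintro _ ⟨mX, mY, hmX, hmY, rfl⟩
  obtain ⟨mX', hmX', hdM⟩ := exists_isEigenDecomp_dM_eq k hm hinj hmX hmY
  exact hdM ▸ dPSR_le_dM k hmX'

/-- `d_SR(X, F(U,D)) ≤ d_PSR(X, (U,D))`, with equality whenever `F(U,D)`
has `p` distinct eigenvalues. -/
theorem dSR_le_dPSR (p : ℕ) (k : ℝ) (hk : 0 < k)
    (X : Matrix (Fin p) (Fin p) ℝ) (hX : IsSPD X)
    (m : Matrix (Fin p) (Fin p) ℝ × Matrix (Fin p) (Fin p) ℝ) (hm : IsM m) :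
    dSR k X (Fmap m) ≤ dPSR k X m ∧
      ((Function.Injective fun i => m.2 i i) → dSR k X (Fmap m) = dPSR k X m) :=
  dSR_le_dPSR_general p k X hX m hm

end SR
end

section
/- If X ∈ Sym⁺(p) has p distinct eigenvalues, then any two distinct eigen-decompositions (U_X,D_X) and (U'_X,D'_X) of X satisfy d_M((U_X,D_X),(U'_X,D'_X)) ≥ √k·β_{G(p)}, where β_{G(p)} is the minimal d_SO-distance from the identity to a nonidentity even signed-permutation matrix. -/
/-!
If `(U₁, D₁)` and `(U₂, D₂)` both decompose `X`, the rotation `h = U₂ᵀ U₁` satisfies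
`h D₁ = D₂ h`, so `h i j ≠ 0` forces `D₂ i i = D₁ j j`. With distinct eigenvalues every row of
`h` then has a single nonzero entry, which makes `h` an even signed permutation, and `h ≠ 1`
unless the decompositions coincide. The set of norms of skew logarithms is invariant under
transposition and orthogonal conjugation, so `d_SO(U₁, U₂) = d_SO(1, h) ≥ β_{G(p)}`.
-/

open scoped BigOperators
open Matrix

namespace SR

variable {p : ℕ}

section Intertwining

variable {n α : Type*} [Fintype n] [CommRing α] {R D E : Matrix n n α}

lemma mul_transpose_apply_of_row_support {σ : n → n} (hσ : ∀ i j, j ≠ σ i → R i j = 0)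
    (i i' : n) : (R * Rᵀ) i i' = R i (σ i) * R i' (σ i) := by
  rw [mul_apply, Finset.sum_eq_single (σ i)]
  · rfl
  · intro j _ hj
    rw [hσ i j hj, zero_mul]
  · simp

variable [DecidableEq n]

lemma diag_eq_of_intertwine_of_ne_zero [NoZeroDivisors α] (hD : D.IsDiag) (hE : E.IsDiag)
    (h : R * D = E * R) {i j : n} (hij : R i j ≠ 0) : E i i = D j j := by
  rw [← (isDiag_iff_diagonal_diag D).mp hD, ← (isDiag_iff_diagonal_diag E).mp hE] at h
  have hij' := congrFun (congrFun h i) j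
  rw [mul_diagonal, diagonal_mul, mul_comm] at hij'
  exact (mul_right_cancel₀ hij hij').symm

lemma exists_ne_zero_of_mul_transpose_eq_one [Nontrivial α] (hR : R * Rᵀ = 1) (i : n) :
    ∃ j, R i j ≠ 0 := by
  by_contra! h
  have hii := congrFun (congrFun hR i) i
  simp [mul_apply, h] at hii

lemma injective_of_mul_transpose_eq_one [NoZeroDivisors α] {σ : n → n} (hR : R * Rᵀ = 1)
    (hσ_ne : ∀ i, R i (σ i) ≠ 0) (hσ : ∀ i j, j ≠ σ i → R i j = 0) : Function.Injective σ := by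
  intro i i' hii'
  by_contra hne
  have h := mul_transpose_apply_of_row_support hσ i i'
  rw [hR, one_apply_ne hne, hii'] at h
  exact mul_ne_zero (hii' ▸ hσ_ne i) (hσ_ne i') h.symm

/-- The nonzero entries of row `i` sit in columns `j` with `D j j = E i i`. -/
lemma exists_row_support_of_intertwine [IsDomain α] (hR : R * Rᵀ = 1) (hD : D.IsDiag)
    (hE : E.IsDiag) (h : R * D = E * R) (hinj : Function.Injective fun i => D i i) :
    ∃ σ : n → n, (∀ i, R i (σ i) ≠ 0) ∧ ∀ i j, j ≠ σ i → R i j = 0 := by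
  choose σ hσ using exists_ne_zero_of_mul_transpose_eq_one hR
  refine ⟨σ, hσ, fun i j hj => ?_⟩
  by_contra hij
  exact hj (hinj <| (diag_eq_of_intertwine_of_ne_zero hD hE h hij).symm.trans
    (diag_eq_of_intertwine_of_ne_zero hD hE h (hσ i)))

lemma injective_diag_of_intertwine [IsDomain α] (hR : R * Rᵀ = 1) (hD : D.IsDiag)
    (hE : E.IsDiag) (h : R * D = E * R) (hinj : Function.Injective fun i => D i i) :
    Function.Injective fun i => E i i := by
  obtain ⟨σ, hσ_ne, hσ⟩ := exists_row_support_of_intertwine hR hD hE h hinj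
  intro i i' hii'
  apply injective_of_mul_transpose_eq_one hR hσ_ne hσ
  apply hinj
  simpa only [← diag_eq_of_intertwine_of_ne_zero hD hE h (hσ_ne _)] using hii'

end Intertwining

lemma isSignedPermMatrix_of_row_support {R : Matrix (Fin p) (Fin p) ℝ} {σ : Fin p → Fin p}
    (hR : R * Rᵀ = 1) (hσ_ne : ∀ i, R i (σ i) ≠ 0) (hσ : ∀ i j, j ≠ σ i → R i j = 0) :
    IsSignedPermMatrix R := by
  let π := Equiv.ofBijective σ (Finite.injective_iff_bijective.mp
    (injective_of_mul_transpose_eq_one hR hσ_ne hσ))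
  refine ⟨π.symm, fun i => R i (σ i), fun i => ?_, fun i j => ?_⟩
  · have h := mul_transpose_apply_of_row_support hσ i i
    rw [hR, one_apply_eq] at h
    exact mul_self_eq_one_iff.mp h.symm
  · split_ifs with hj
    · obtain rfl := (Equiv.eq_symm_apply π).mp hj
      exact (mul_one _).symm
    · rw [mul_zero]
      exact hσ i j fun hji => hj ((Equiv.eq_symm_apply π).mpr (hji ▸ rfl))

lemma isSignedPermMatrix_of_intertwine {R D E : Matrix (Fin p) (Fin p) ℝ} (hR : R * Rᵀ = 1)
    (hD : D.IsDiag) (hE : E.IsDiag) (h : R * D = E * R)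
    (hinj : Function.Injective fun i => D i i) : IsSignedPermMatrix R :=
  have ⟨_, hσ_ne, hσ⟩ := exists_row_support_of_intertwine hR hD hE h hinj
  isSignedPermMatrix_of_row_support hR hσ_ne hσ

section EigenDecomp

variable {X : Matrix (Fin p) (Fin p) ℝ}
  {m₁ m₂ : Matrix (Fin p) (Fin p) ℝ × Matrix (Fin p) (Fin p) ℝ}

lemma IsSO.transpose_mul_self {U : Matrix (Fin p) (Fin p) ℝ} (hU : IsSO U) : Uᵀ * U = 1 :=
  mul_eq_one_comm.mp hU.1

lemma IsSO.transpose_mul {U V : Matrix (Fin p) (Fin p) ℝ} (hU : IsSO U) (hV : IsSO V) :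
    IsSO (Vᵀ * U) := by
  refine ⟨?_, by rw [det_mul, det_transpose, hU.2, hV.2, one_mul]⟩
  rw [Matrix.transpose_mul, transpose_transpose, Matrix.mul_assoc, ← Matrix.mul_assoc U, hU.1,
    Matrix.one_mul, hV.transpose_mul_self]

lemma IsEigenDecomp.intertwine (h₁ : IsEigenDecomp X m₁) (h₂ : IsEigenDecomp X m₂) :
    (m₂.1ᵀ * m₁.1) * m₁.2 = m₂.2 * (m₂.1ᵀ * m₁.1) := by
  have hF : m₁.1 * m₁.2 * m₁.1ᵀ = m₂.1 * m₂.2 * m₂.1ᵀ := h₁.2.trans h₂.2.symm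
  calc (m₂.1ᵀ * m₁.1) * m₁.2 = m₂.1ᵀ * (m₁.1 * m₁.2 * m₁.1ᵀ) * m₁.1 := by
        simp only [Matrix.mul_assoc, h₁.1.1.transpose_mul_self, Matrix.mul_one]
    _ = m₂.2 * (m₂.1ᵀ * m₁.1) := by
        rw [hF]
        simp only [← Matrix.mul_assoc, h₂.1.1.transpose_mul_self, Matrix.one_mul]

lemma IsEigenDecomp.injective_diag (hX : HasDistinctEigs X) (h : IsEigenDecomp X m₁) :
    Function.Injective fun i => m₁.2 i i :=
  have ⟨_, h₀, hinj₀⟩ := hX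
  injective_diag_of_intertwine (h₀.1.1.transpose_mul h.1.1).1 h₀.1.2.1 h.1.2.1
    (h₀.intertwine h) hinj₀

lemma IsEigenDecomp.isEvenSignedPerm_transition (hX : HasDistinctEigs X)
    (h₁ : IsEigenDecomp X m₁) (h₂ : IsEigenDecomp X m₂) : IsEvenSignedPerm (m₂.1ᵀ * m₁.1) :=
  ⟨isSignedPermMatrix_of_intertwine (h₁.1.1.transpose_mul h₂.1.1).1 h₁.1.2.1 h₂.1.2.1
    (h₁.intertwine h₂) (h₁.injective_diag hX), (h₁.1.1.transpose_mul h₂.1.1).2⟩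

lemma IsEigenDecomp.transition_ne_one (h₁ : IsEigenDecomp X m₁) (h₂ : IsEigenDecomp X m₂)
    (hne : m₁ ≠ m₂) : m₂.1ᵀ * m₁.1 ≠ 1 := by
  intro hQ
  have hD := h₁.intertwine h₂
  rw [hQ, Matrix.one_mul, Matrix.mul_one] at hD
  refine hne (Prod.ext ?_ hD)
  rw [← Matrix.one_mul m₁.1, ← h₂.1.1.1, Matrix.mul_assoc, hQ, Matrix.mul_one]

end EigenDecomp

def skewLogNorms (W : Matrix (Fin p) (Fin p) ℝ) : Set ℝ :=
  {x : ℝ | ∃ A : Matrix (Fin p) (Fin p) ℝ, Aᵀ = -A ∧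
    NormedSpace.exp A = W ∧ x = (1 / Real.sqrt 2) * frobNorm A}

lemma dSO_eq_sInf_skewLogNorms (U V : Matrix (Fin p) (Fin p) ℝ) :
    dSO U V = sInf (skewLogNorms (V * Uᵀ)) :=
  rfl

lemma frobNorm_eq_sqrt_trace (A : Matrix (Fin p) (Fin p) ℝ) :
    frobNorm A = Real.sqrt (trace (Aᵀ * A)) := by
  unfold frobNorm
  congr 1
  simp only [trace, diag, mul_apply, transpose_apply, sq]
  exact Finset.sum_comm

lemma frobNorm_transpose (A : Matrix (Fin p) (Fin p) ℝ) : frobNorm Aᵀ = frobNorm A := by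
  rw [frobNorm_eq_sqrt_trace, frobNorm_eq_sqrt_trace, transpose_transpose, trace_mul_comm]

lemma frobNorm_conj {M : Matrix (Fin p) (Fin p) ℝ} (hM : M * Mᵀ = 1)
    (A : Matrix (Fin p) (Fin p) ℝ) : frobNorm (Mᵀ * A * M) = frobNorm A := by
  have h : (Mᵀ * A * M)ᵀ * (Mᵀ * A * M) = Mᵀ * (Aᵀ * (M * Mᵀ) * A) * M := by
    simp only [Matrix.transpose_mul, transpose_transpose, Matrix.mul_assoc]
  rw [frobNorm_eq_sqrt_trace, frobNorm_eq_sqrt_trace, h, hM, Matrix.mul_one, trace_mul_cycle,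
    hM, Matrix.one_mul]

lemma skewLogNorms_transpose (W : Matrix (Fin p) (Fin p) ℝ) :
    skewLogNorms Wᵀ = skewLogNorms W := by
  have key : ∀ W : Matrix (Fin p) (Fin p) ℝ, skewLogNorms W ⊆ skewLogNorms Wᵀ := by
    rintro W x ⟨A, hskew, hexp, rfl⟩
    refine ⟨Aᵀ, by rw [hskew, transpose_neg, hskew, neg_neg], ?_, by rw [frobNorm_transpose]⟩
    rw [Matrix.exp_transpose, hexp]
  exact (key W).antisymm' (transpose_transpose W ▸ key Wᵀ)

lemma skewLogNorms_conj {M : Matrix (Fin p) (Fin p) ℝ} (hM : M * Mᵀ = 1)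
    (W : Matrix (Fin p) (Fin p) ℝ) : skewLogNorms (Mᵀ * W * M) = skewLogNorms W := by
  have key : ∀ M W : Matrix (Fin p) (Fin p) ℝ, M * Mᵀ = 1 →
      skewLogNorms W ⊆ skewLogNorms (Mᵀ * W * M) := by
    rintro M W hM x ⟨A, hskew, hexp, rfl⟩
    have hMinv : M⁻¹ = Mᵀ := inv_eq_right_inv hM
    have hMunit : IsUnit M := ⟨⟨M, Mᵀ, hM, mul_eq_one_comm.mp hM⟩, rfl⟩
    refine ⟨Mᵀ * A * M, ?_, ?_, by rw [frobNorm_conj hM]⟩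
    · simp only [transpose_mul, transpose_transpose, hskew, Matrix.mul_neg, Matrix.neg_mul,
        Matrix.mul_assoc]
    · rw [← hMinv, Matrix.exp_conj' M A hMunit, hexp]
  have hM' : Mᵀ * Mᵀᵀ = 1 := by rw [transpose_transpose]; exact mul_eq_one_comm.mp hM
  refine (key M W hM).antisymm' ?_
  have h := key Mᵀ (Mᵀ * W * M) hM'
  simp only [transpose_transpose, ← Matrix.mul_assoc, hM, Matrix.one_mul] at h
  simpa only [Matrix.mul_assoc, hM, Matrix.mul_one] using h

lemma dSO_eq_dSO_one_transpose_mul {V : Matrix (Fin p) (Fin p) ℝ} (hV : V * Vᵀ = 1)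
    (U : Matrix (Fin p) (Fin p) ℝ) : dSO U V = dSO 1 (Vᵀ * U) := by
  have hW : Vᵀ * U * 1ᵀ = Vᵀ * (V * Uᵀ)ᵀ * V := by
    rw [transpose_one, Matrix.mul_one, transpose_mul, transpose_transpose, Matrix.mul_assoc,
      Matrix.mul_assoc, mul_eq_one_comm.mp hV, Matrix.mul_one]
  rw [dSO_eq_sInf_skewLogNorms, dSO_eq_sInf_skewLogNorms, hW, skewLogNorms_conj hV,
    skewLogNorms_transpose]

lemma dSO_nonneg (U V : Matrix (Fin p) (Fin p) ℝ) : 0 ≤ dSO U V := by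
  apply Real.sInf_nonneg
  rintro x ⟨A, -, -, rfl⟩
  exact mul_nonneg (by positivity) (Real.sqrt_nonneg _)

lemma betaG_le_dSO {h : Matrix (Fin p) (Fin p) ℝ} (hh : IsEvenSignedPerm h) (hne : h ≠ 1) :
    betaG p ≤ dSO 1 h :=
  csInf_le ⟨0, by rintro x ⟨h, -, -, rfl⟩; exact dSO_nonneg 1 h⟩ ⟨h, hh, hne, rfl⟩

lemma sqrt_mul_dSO_le_dM (k : ℝ) (m₁ m₂ : Matrix (Fin p) (Fin p) ℝ × Matrix (Fin p) (Fin p) ℝ) :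
    Real.sqrt k * dSO m₁.1 m₂.1 ≤ dM k m₁ m₂ := by
  calc Real.sqrt k * dSO m₁.1 m₂.1 = Real.sqrt (k * dSO m₁.1 m₂.1 ^ 2) := by
        rw [Real.sqrt_mul' k (sq_nonneg _), Real.sqrt_sq (dSO_nonneg _ _)]
    _ ≤ dM k m₁ m₂ := Real.sqrt_le_sqrt (le_add_of_nonneg_right (sq_nonneg _))

theorem distinct_eigendecomp_separation_general (p : ℕ) (k : ℝ)
    (X : Matrix (Fin p) (Fin p) ℝ) (hdist : HasDistinctEigs X)
    (m₁ m₂ : Matrix (Fin p) (Fin p) ℝ × Matrix (Fin p) (Fin p) ℝ)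
    (h₁ : IsEigenDecomp X m₁) (h₂ : IsEigenDecomp X m₂) (hne : m₁ ≠ m₂) :
    Real.sqrt k * betaG p ≤ dM k m₁ m₂ := by
  have hβ : betaG p ≤ dSO 1 (m₂.1ᵀ * m₁.1) :=
    betaG_le_dSO (h₁.isEvenSignedPerm_transition hdist h₂) (h₁.transition_ne_one h₂ hne)
  calc Real.sqrt k * betaG p ≤ Real.sqrt k * dSO 1 (m₂.1ᵀ * m₁.1) :=
        mul_le_mul_of_nonneg_left hβ (Real.sqrt_nonneg k)
    _ = Real.sqrt k * dSO m₁.1 m₂.1 := by rw [dSO_eq_dSO_one_transpose_mul h₂.1.1.1]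
    _ ≤ dM k m₁ m₂ := sqrt_mul_dSO_le_dM k m₁ m₂

/-- if `X` has `p` distinct eigenvalues, any two distinct
eigen-decompositions of `X` are at `d_M`-distance at least `√k · β_{G(p)}`. -/
theorem distinct_eigendecomp_separation (p : ℕ) (k : ℝ) (hk : 0 < k)
    (X : Matrix (Fin p) (Fin p) ℝ) (hX : IsSPD X) (hdist : HasDistinctEigs X)
    (m₁ m₂ : Matrix (Fin p) (Fin p) ℝ × Matrix (Fin p) (Fin p) ℝ)
    (h₁ : IsEigenDecomp X m₁) (h₂ : IsEigenDecomp X m₂) (hne : m₁ ≠ m₂) :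
    Real.sqrt k * betaG p ≤ dM k m₁ m₂ :=
  distinct_eigendecomp_separation_general p k X hdist m₁ m₂ h₁ h₂ hne

end SR
end
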